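/- Let p and q be distinct primes, X a type, and k ≥ 1. Suppose that to every finite subset K of X with at most k elements there is assigned a nonempty affine subspace F_K of the ZMod p–vector space of functions K → ZMod p, such that for all subsets L ⊆ K (|K| ≤ k) the image of F_K under the restriction map f ↦ f|_L equals F_L. Let d_K denote the dimension (over ZMod p) of the direction of F_K. Then: (i) the cardinality of F_K is p^{d_K}; (ii) for all L ⊆ K (|K| ≤ k) we have d_L ≤ d_K, and for every g ∈ F_L the cardinality of { f ∈ F_K : f|_L = g } is p^{d_K − d_L}; and consequently (iii) setting x_{K,f} := ((p : ZMod q)^{d_K})⁻¹ for f ∈ F_K (which is well defined since p is invertible in ZMod q), we have, in ZMod q, Σ_{f∈F_K} x_{K,f} = 1 for every such K, and Σ_{f∈F_K : f|_L = g} x_{K,f} = x_{L,g} for all L ⊆ K (|K| ≤ k) and g ∈ F_L. -/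

import Mathlib

/-!
A nonempty affine subspace over `ZMod p` is a translate of its direction, so it has `p ^ d`
points. Restriction maps the direction of `F K` onto that of `F L`, and a fibre of
`F K → F L` is a translate of the kernel of restriction on directions, which by rank–nullity
has dimension `d K - d L`. The sums in (iii) are constant sums over sets of these sizes, and
`p` is a unit in `ZMod q` because `p ≠ q` are primes.
-/

/-- The linear restriction map `(K → ZMod p) → (L → ZMod p)` for `L ⊆ K`
(precomposition with the inclusion). -/
noncomputable def restrictLM (p : ℕ) {X : Type} {L K : Finset X} (h : L ⊆ K) :
    ((↥K : Type) → ZMod p) →ₗ[ZMod p] ((↥L : Type) → ZMod p) :=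
  LinearMap.funLeft (ZMod p) (ZMod p) (fun y => ⟨y.1, h y.2⟩)

open Module

namespace AffineSubspace

section Ring

variable {k V W : Type*} [Ring k] [AddCommGroup V] [Module k V] [AddCommGroup W] [Module k W]

theorem natCard_eq_natCard_direction {S : AffineSubspace k V} (hS : (S : Set V).Nonempty) :
    Nat.card S = Nat.card S.direction := by
  obtain ⟨x, hx⟩ := hS
  have : Nonempty S := ⟨⟨x, hx⟩⟩
  exact (Nat.card_congr (Equiv.vaddConst (⟨x, hx⟩ : S))).symm

def fiberEquivKerDomRestrict (S : AffineSubspace k V) (r : V →ₗ[k] W) {f₀ : V} (hf₀ : f₀ ∈ S) :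
    {f : V // f ∈ S ∧ r f = r f₀} ≃ LinearMap.ker (r.domRestrict S.direction) where
  toFun f := ⟨⟨f.1 -ᵥ f₀, vsub_mem_direction f.2.1 hf₀⟩, by simp [f.2.2]⟩
  invFun v := ⟨v.1.1 +ᵥ f₀, vadd_mem_of_mem_direction v.1.2 hf₀, by
    have hv : r v.1.1 = 0 := v.2
    simp [hv]⟩
  left_inv f := by ext; simp
  right_inv v := by ext; simp

theorem direction_map_linear (S : AffineSubspace k V) (r : V →ₗ[k] W) :
    (S.map r.toAffineMap).direction = S.direction.map r := by
  rw [map_direction, LinearMap.toAffineMap_linear]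

end Ring

section DivisionRing

variable {k V W : Type*} [DivisionRing k] [AddCommGroup V] [Module k V] [FiniteDimensional k V]
  [AddCommGroup W] [Module k W]

theorem natCard_eq_pow_finrank {S : AffineSubspace k V} (hS : (S : Set V).Nonempty) :
    Nat.card S = Nat.card k ^ finrank k S.direction := by
  rw [natCard_eq_natCard_direction hS, Module.natCard_eq_pow_finrank (K := k)]

theorem finrank_direction_map_le (S : AffineSubspace k V) (r : V →ₗ[k] W) :
    finrank k (S.map r.toAffineMap).direction ≤ finrank k S.direction := by
  rw [direction_map_linear]
  exact Submodule.finrank_map_le _ _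

theorem natCard_fiber_eq_pow (S : AffineSubspace k V) (r : V →ₗ[k] W) {g : W}
    (hg : g ∈ S.map r.toAffineMap) :
    Nat.card {f : V // f ∈ S ∧ r f = g}
      = Nat.card k ^ (finrank k S.direction - finrank k (S.map r.toAffineMap).direction) := by
  obtain ⟨f₀, hf₀, rfl⟩ := hg
  rw [LinearMap.coe_toAffineMap]
  have rank_nullity := (r.domRestrict S.direction).finrank_range_add_finrank_ker
  rw [LinearMap.range_domRestrict, ← direction_map_linear] at rank_nullity
  rw [Nat.card_congr (S.fiberEquivKerDomRestrict r hf₀), Module.natCard_eq_pow_finrank (K := k)]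
  congr 1
  omega

end DivisionRing

end AffineSubspace

theorem finsum_mem_const_of_finite {α M : Type*} [AddCommMonoid M] {s : Set α} (hs : s.Finite)
    (c : M) : ∑ᶠ i ∈ s, c = Nat.card s • c := by
  rw [finsum_mem_eq_finite_toFinset_sum _ hs, Finset.sum_const, Nat.card_eq_card_finite_toFinset hs]

theorem affine_consistent_system_solves_modq_system_general
    (p q : ℕ) (hp : p.Prime) (hq : q.Prime) (hpq : p ≠ q)
    (X : Type) (k : ℕ)
    (F : ∀ (K : Finset X), K.card ≤ k → AffineSubspace (ZMod p) ((↥K : Type) → ZMod p))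
    (hne : ∀ (K : Finset X) (hK : K.card ≤ k), ((F K hK : Set ((↥K : Type) → ZMod p))).Nonempty)
    (himg : ∀ (K L : Finset X) (hK : K.card ≤ k) (hLK : L ⊆ K),
      (F K hK).map (restrictLM p hLK).toAffineMap
        = F L ((Finset.card_le_card hLK).trans hK)) :
    -- (i)
    (∀ (K : Finset X) (hK : K.card ≤ k),
      Nat.card ↥(F K hK)
        = p ^ (Module.finrank (ZMod p) ↥(F K hK).direction)) ∧
    -- (ii)
    (∀ (K L : Finset X) (hK : K.card ≤ k) (hLK : L ⊆ K),
      Module.finrank (ZMod p) ↥(F L ((Finset.card_le_card hLK).trans hK)).direction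
          ≤ Module.finrank (ZMod p) ↥(F K hK).direction ∧
      ∀ g ∈ F L ((Finset.card_le_card hLK).trans hK),
        Nat.card { f : (↥K : Type) → ZMod p // f ∈ F K hK ∧ restrictLM p hLK f = g }
          = p ^ (Module.finrank (ZMod p) ↥(F K hK).direction
              - Module.finrank (ZMod p) ↥(F L ((Finset.card_le_card hLK).trans hK)).direction)) ∧
    -- (iii)
    (∀ (K : Finset X) (hK : K.card ≤ k),
      ∑ᶠ f ∈ (F K hK : Set ((↥K : Type) → ZMod p)),
          ((p : ZMod q) ^ (Module.finrank (ZMod p) ↥(F K hK).direction))⁻¹ = 1) ∧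
    (∀ (K L : Finset X) (hK : K.card ≤ k) (hLK : L ⊆ K),
      ∀ g ∈ F L ((Finset.card_le_card hLK).trans hK),
        ∑ᶠ f ∈ { f : (↥K : Type) → ZMod p | f ∈ F K hK ∧ restrictLM p hLK f = g },
            ((p : ZMod q) ^ (Module.finrank (ZMod p) ↥(F K hK).direction))⁻¹
          = ((p : ZMod q) ^ (Module.finrank (ZMod p)
              ↥(F L ((Finset.card_le_card hLK).trans hK)).direction))⁻¹) := by
  have := Fact.mk hp
  have := Fact.mk hq
  have hp0 : (p : ZMod q) ≠ 0 := by
    rw [Ne, ZMod.natCast_eq_zero_iff]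
    exact fun hdvd => hpq ((Nat.prime_dvd_prime_iff_eq hq hp).mp hdvd).symm
  have card_F : ∀ K hK, Nat.card (F K hK) = p ^ finrank (ZMod p) (F K hK).direction :=
    fun K hK => by rw [AffineSubspace.natCard_eq_pow_finrank (hne K hK), Nat.card_zmod]
  refine ⟨card_F, fun K L hK hLK => ?_, fun K hK => ?_, fun K L hK hLK g hg => ?_⟩
  · rw [← himg K L hK hLK]
    refine ⟨(F K hK).finrank_direction_map_le _, fun g hg => ?_⟩
    rw [AffineSubspace.natCard_fiber_eq_pow _ _ hg, Nat.card_zmod]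
  · rw [finsum_mem_const_of_finite (Set.toFinite _), SetLike.coe_sort_coe, card_F,
      nsmul_eq_mul, Nat.cast_pow, mul_inv_cancel₀ (pow_ne_zero _ hp0)]
  · rw [← himg K L hK hLK] at hg ⊢
    rw [finsum_mem_const_of_finite (Set.toFinite _), Set.coe_ofPred,
      AffineSubspace.natCard_fiber_eq_pow _ _ hg, Nat.card_zmod, nsmul_eq_mul, Nat.cast_pow,
      pow_sub₀ _ hp0 ((F K hK).finrank_direction_map_le _)]
    field_simp

/-- **Statement 12.** Let `p ≠ q` be primes, `X` a type, `k ≥ 1`.  Suppose each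
finite subset `K` of `X` with at most `k` elements carries a nonempty affine
subspace `F K` of `K → ZMod p` such that the image of `F K` under restriction
to `L ⊆ K` is `F L`.  Writing `d K` for the dimension of the direction of
`F K`, then: (i) `|F K| = p ^ d K`; (ii) for `L ⊆ K`, `d L ≤ d K` and each
fibre of the restriction `F K → F L` has exactly `p ^ (d K − d L)` elements;
and (iii) the uniform weights `x K f = ((p : ZMod q) ^ d K)⁻¹` solve, in
`ZMod q`, the affine Sherali–Adams marginal system. -/
theorem affine_consistent_system_solves_modq_system
    (p q : ℕ) (hp : p.Prime) (hq : q.Prime) (hpq : p ≠ q)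
    (X : Type) (k : ℕ) (hk : 1 ≤ k)
    (F : ∀ (K : Finset X), K.card ≤ k → AffineSubspace (ZMod p) ((↥K : Type) → ZMod p))
    (hne : ∀ (K : Finset X) (hK : K.card ≤ k), ((F K hK : Set ((↥K : Type) → ZMod p))).Nonempty)
    (himg : ∀ (K L : Finset X) (hK : K.card ≤ k) (hLK : L ⊆ K),
      (F K hK).map (restrictLM p hLK).toAffineMap
        = F L ((Finset.card_le_card hLK).trans hK)) :
    -- (i)
    (∀ (K : Finset X) (hK : K.card ≤ k),
      Nat.card ↥(F K hK)
        = p ^ (Module.finrank (ZMod p) ↥(F K hK).direction)) ∧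
    -- (ii)
    (∀ (K L : Finset X) (hK : K.card ≤ k) (hLK : L ⊆ K),
      Module.finrank (ZMod p) ↥(F L ((Finset.card_le_card hLK).trans hK)).direction
          ≤ Module.finrank (ZMod p) ↥(F K hK).direction ∧
      ∀ g ∈ F L ((Finset.card_le_card hLK).trans hK),
        Nat.card { f : (↥K : Type) → ZMod p // f ∈ F K hK ∧ restrictLM p hLK f = g }
          = p ^ (Module.finrank (ZMod p) ↥(F K hK).direction
              - Module.finrank (ZMod p) ↥(F L ((Finset.card_le_card hLK).trans hK)).direction)) ∧
    -- (iii)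
    (∀ (K : Finset X) (hK : K.card ≤ k),
      ∑ᶠ f ∈ (F K hK : Set ((↥K : Type) → ZMod p)),
          ((p : ZMod q) ^ (Module.finrank (ZMod p) ↥(F K hK).direction))⁻¹ = 1) ∧
    (∀ (K L : Finset X) (hK : K.card ≤ k) (hLK : L ⊆ K),
      ∀ g ∈ F L ((Finset.card_le_card hLK).trans hK),
        ∑ᶠ f ∈ { f : (↥K : Type) → ZMod p | f ∈ F K hK ∧ restrictLM p hLK f = g },
            ((p : ZMod q) ^ (Module.finrank (ZMod p) ↥(F K hK).direction))⁻¹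
          = ((p : ZMod q) ^ (Module.finrank (ZMod p)
              ↥(F L ((Finset.card_le_card hLK).trans hK)).direction))⁻¹) :=
  affine_consistent_system_solves_modq_system_general p q hp hq hpq X k F hne himg
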